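/- arXiv:2408.08034 — 2 statements merged into one kernel-verified Lean document; each statement's English description precedes it below -/
import Mathlib

section
/- Fix d : ℕ, real numbers α ≥ 0, ξ > 0, μ > 0, a finite index set E, vectors a_e ∈ EuclideanSpace ℝ (Fin d) and reals c_e for e ∈ E. Define the map G : EuclideanSpace ℝ (Fin d) → EuclideanSpace ℝ (Fin d) by G(x) = −((x_i + ξ)^(−α))_i + μ Σ_{e ∈ E} (1/(1 + exp(−⟪a_e, x⟫ + c_e))) • a_e (the gradient of the smoothly penalized NUM objective V_S(x) = −Σ_i (x_i + ξ)^(1−α)/(1−α) + μ Σ_e ln(1 + exp(⟪a_e, x⟫ − c_e))). Then for all x, y in the nonnegative orthant, ‖G(x) − G(y)‖ ≤ β_V · ‖x − y‖, where β_V = α/ξ^(α+1) + (μ/4) Σ_{e ∈ E} ‖a_e‖²; that is, V_S is β_V-smooth on the nonnegative orthant. -/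
/-!
Both parts of the gradient are handled by the one-dimensional mean value theorem. On the
orthant every shifted coordinate `x_i + ξ` is at least `ξ`, where `|d/dt t^(-α)| = α t^(-α-1)`
is at most `α / ξ^(α+1)`; this bound holds coordinatewise, hence for the Euclidean norm.
The penalty part is a sum of the vectors `a_e` weighted by the logistic sigmoid, whose derivative
`σ (1 - σ)` is at most `1/4`; composing with `x ↦ ⟪a_e, x⟫` costs a factor `‖a_e‖`, and the
vector `a_e` itself another one.
-/

open Real RealInnerProductSpace

lemma abs_rpow_neg_sub_rpow_neg_le {α ξ p q : ℝ} (hα : 0 ≤ α) (hξ : 0 < ξ)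
    (hp : ξ ≤ p) (hq : ξ ≤ q) :
    |p ^ (-α) - q ^ (-α)| ≤ α / ξ ^ (α + 1) * |p - q| := by
  have hderiv : ∀ t ∈ Set.Ici ξ,
      HasDerivWithinAt (fun t : ℝ => t ^ (-α)) (-α * t ^ (-α - 1)) (Set.Ici ξ) t :=
    fun t ht => (hasDerivAt_rpow_const (Or.inl (hξ.trans_le ht).ne')).hasDerivWithinAt
  have hbound : ∀ t ∈ Set.Ici ξ, ‖-α * t ^ (-α - 1)‖ ≤ α / ξ ^ (α + 1) := by
    intro t (ht : ξ ≤ t)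
    have hdecay : t ^ (-α - 1) ≤ ξ ^ (-α - 1) := rpow_le_rpow_of_nonpos hξ ht (by linarith)
    rw [norm_mul, norm_neg, norm_of_nonneg hα, norm_of_nonneg (rpow_nonneg (hξ.le.trans ht) _),
      div_eq_mul_inv, ← rpow_neg hξ.le, neg_add']
    exact mul_le_mul_of_nonneg_left hdecay hα
  simpa only [norm_eq_abs] using
    (convex_Ici ξ).norm_image_sub_le_of_norm_hasDerivWithin_le hderiv hbound hq hp

lemma sigmoid_mul_one_sub_sigmoid_le (x : ℝ) : sigmoid x * (1 - sigmoid x) ≤ 1 / 4 := by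
  nlinarith [sq_nonneg (sigmoid x - 1 / 2)]

lemma abs_sigmoid_sub_sigmoid_le (u v : ℝ) : |sigmoid u - sigmoid v| ≤ 1 / 4 * |u - v| := by
  have hbound : ∀ t ∈ Set.univ, ‖sigmoid t * (1 - sigmoid t)‖ ≤ 1 / 4 := fun t _ => by
    rw [norm_of_nonneg (mul_nonneg (sigmoid_nonneg t) (sub_nonneg.2 (sigmoid_le_one t)))]
    exact sigmoid_mul_one_sub_sigmoid_le t
  simpa only [norm_eq_abs] using convex_univ.norm_image_sub_le_of_norm_hasDerivWithin_le
    (fun t _ => (hasDerivAt_sigmoid t).hasDerivWithinAt) hbound (Set.mem_univ v) (Set.mem_univ u)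

lemma EuclideanSpace.norm_le_mul_norm_of_abs_le {ι : Type*} [Fintype ι] {C : ℝ} (hC : 0 ≤ C)
    {u v : EuclideanSpace ℝ ι} (h : ∀ i, |u i| ≤ C * |v i|) : ‖u‖ ≤ C * ‖v‖ := by
  refine le_of_sq_le_sq ?_ (by positivity)
  rw [mul_pow, EuclideanSpace.real_norm_sq_eq, EuclideanSpace.real_norm_sq_eq, Finset.mul_sum]
  refine Finset.sum_le_sum fun i _ => ?_
  rw [← sq_abs (u i), ← sq_abs (v i), ← mul_pow]
  exact pow_le_pow_left₀ (abs_nonneg _) (h i) 2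

lemma norm_toLp_rpow_neg_sub_le {ι : Type*} [Fintype ι] {α ξ : ℝ} (hα : 0 ≤ α) (hξ : 0 < ξ)
    {x y : EuclideanSpace ℝ ι} (hx : ∀ i, 0 ≤ x i) (hy : ∀ i, 0 ≤ y i) :
    ‖(WithLp.toLp 2 fun i => (x i + ξ) ^ (-α) : EuclideanSpace ℝ ι) -
        WithLp.toLp 2 fun i => (y i + ξ) ^ (-α)‖ ≤ α / ξ ^ (α + 1) * ‖x - y‖ := by
  refine EuclideanSpace.norm_le_mul_norm_of_abs_le (by positivity) fun i => ?_
  simpa only [PiLp.sub_apply, add_sub_add_right_eq_sub] using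
    abs_rpow_neg_sub_rpow_neg_le (p := x i + ξ) (q := y i + ξ) hα hξ
      (by linarith [hx i]) (by linarith [hy i])

lemma norm_sum_sigmoid_inner_sub_smul_le {F E : Type*} [NormedAddCommGroup F]
    [InnerProductSpace ℝ F] [Fintype E] (a : E → F) (c : E → ℝ) (x y : F) :
    ‖∑ e, (sigmoid (⟪a e, x⟫ - c e) - sigmoid (⟪a e, y⟫ - c e)) • a e‖ ≤
      (1 / 4 * ∑ e, ‖a e‖ ^ 2) * ‖x - y‖ := by
  rw [Finset.mul_sum, Finset.sum_mul]
  refine (norm_sum_le _ _).trans (Finset.sum_le_sum fun e _ => ?_)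
  have hsigmoid : |sigmoid (⟪a e, x⟫ - c e) - sigmoid (⟪a e, y⟫ - c e)| ≤
      1 / 4 * (‖a e‖ * ‖x - y‖) := by
    refine (abs_sigmoid_sub_sigmoid_le _ _).trans (mul_le_mul_of_nonneg_left ?_ (by norm_num))
    rw [sub_sub_sub_cancel_right, ← inner_sub_right]
    exact abs_real_inner_le_norm _ _
  calc ‖(sigmoid (⟪a e, x⟫ - c e) - sigmoid (⟪a e, y⟫ - c e)) • a e‖
      ≤ 1 / 4 * (‖a e‖ * ‖x - y‖) * ‖a e‖ := by
        rw [norm_smul, norm_eq_abs]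
        exact mul_le_mul_of_nonneg_right hsigmoid (norm_nonneg _)
    _ = 1 / 4 * ‖a e‖ ^ 2 * ‖x - y‖ := by ring

/-- The gradient `G` of the smoothly penalized NUM objective
`V_S(x) = −Σ_i (x_i + ξ)^(1−α)/(1−α) + μ Σ_e ln(1 + exp(⟪a_e, x⟫ − c_e))`
is `β_V`-Lipschitz on the nonnegative orthant, where
`β_V = α/ξ^(α+1) + (μ/4) Σ_e ‖a_e‖²`; i.e. `V_S` is `β_V`-smooth there. -/
theorem stmt_6 (d : ℕ) (α ξ μ : ℝ) (hα : 0 ≤ α) (hξ : 0 < ξ) (hμ : 0 < μ)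
    (E : Type*) [Fintype E]
    (a : E → EuclideanSpace ℝ (Fin d)) (c : E → ℝ)
    (G : EuclideanSpace ℝ (Fin d) → EuclideanSpace ℝ (Fin d))
    (hG : ∀ x : EuclideanSpace ℝ (Fin d),
      G x = -(show EuclideanSpace ℝ (Fin d) from WithLp.toLp 2 (fun i : Fin d => (x i + ξ) ^ (-α)))
        + μ • ∑ e, (1 / (1 + Real.exp (-⟪a e, x⟫ + c e))) • a e) :
    ∀ x y : EuclideanSpace ℝ (Fin d), (∀ i, 0 ≤ x i) → (∀ i, 0 ≤ y i) →
      ‖G x - G y‖ ≤ (α / ξ ^ (α + 1) + (μ / 4) * ∑ e, ‖a e‖ ^ 2) * ‖x - y‖ := by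
  intro x y hx hy
  have hweight : ∀ z e, 1 / (1 + exp (-⟪a e, z⟫ + c e)) = sigmoid (⟪a e, z⟫ - c e) := by
    intro z e
    rw [sigmoid_def, one_div, neg_sub', sub_neg_eq_add]
  set U : EuclideanSpace ℝ (Fin d) → EuclideanSpace ℝ (Fin d) :=
    fun z => WithLp.toLp 2 fun i => (z i + ξ) ^ (-α)
  have hsplit : G x - G y = -(U x - U y) +
      μ • ∑ e, (sigmoid (⟪a e, x⟫ - c e) - sigmoid (⟪a e, y⟫ - c e)) • a e := by
    simp only [hG, hweight, sub_smul, Finset.sum_sub_distrib, smul_sub]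
    abel
  calc ‖G x - G y‖
      ≤ ‖U x - U y‖ +
          μ * ‖∑ e, (sigmoid (⟪a e, x⟫ - c e) - sigmoid (⟪a e, y⟫ - c e)) • a e‖ := by
        rw [hsplit]
        refine (norm_add_le _ _).trans_eq ?_
        rw [norm_neg, norm_smul, norm_of_nonneg hμ.le]
    _ ≤ α / ξ ^ (α + 1) * ‖x - y‖ + μ * ((1 / 4 * ∑ e, ‖a e‖ ^ 2) * ‖x - y‖) :=
        add_le_add (norm_toLp_rpow_neg_sub_le hα hξ hx hy)
          (mul_le_mul_of_nonneg_left (norm_sum_sigmoid_inner_sub_smul_le a c x y) hμ.le)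
    _ = (α / ξ ^ (α + 1) + (μ / 4) * ∑ e, ‖a e‖ ^ 2) * ‖x - y‖ := by ring
end

section
/- Fix d : ℕ and β > 0. Let f : EuclideanSpace ℝ (Fin d) → ℝ be convex and differentiable with gradient ∇f that is β-Lipschitz on all of EuclideanSpace ℝ (Fin d). Let K be the nonnegative orthant, let x* ∈ K satisfy f(x*) ≤ f(z) for all z ∈ K, and let x⁰ ∈ K. Define sequences by y⁰ = x⁰, a₀ = 1, and for t ≥ 0: x^{t+1} = [y^t − (1/β)∇f(y^t)]₊ (coordinatewise positive part), a_{t+1} = (1 + √(4a_t² + 1))/2, y^{t+1} = x^{t+1} + ((a_t − 1)/a_{t+1})·(x^{t+1} − x^t). Then for every T ≥ 1, f(x^T) − f(x*) ≤ 2β‖x* − x⁰‖²/(T + 1)². -/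
/-!
A projected gradient step `x⁺ = [y - ∇f(y)/β]₊` satisfies, for every `z` in the orthant,
`f(x⁺) - f(z) ≤ β/2 (‖y - z‖² - ‖x⁺ - z‖²)`: combine the descent lemma of `β`-smooth functions,
the gradient inequality of convex functions and the variational inequality of the projection.
Adding `aₜ(aₜ - 1)` times this inequality at `z = xᵗ` to `aₜ` times it at `z = x*`, and using
`aₜ₊₁² - aₜ₊₁ = aₜ²`, shows that the energy
`aₜ² (f(xᵗ⁺¹) - f(x*)) + β/2 ‖(aₜ - 1)(xᵗ⁺¹ - xᵗ) + (xᵗ⁺¹ - x*)‖²` never exceeds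
`β/2 ‖x⁰ - x*‖²`. Since `aₜ ≥ (t + 2)/2`, this gives the rate.
-/

open Real AffineMap
open scoped RealInnerProductSpace

lemma inner_sub_max_zero_nonpos {ι : Type*} [Fintype ι] {u p z : EuclideanSpace ℝ ι}
    (hp : ∀ i, p i = max (u i) 0) (hz : ∀ i, 0 ≤ z i) : ⟪u - p, z - p⟫ ≤ 0 := by
  rw [PiLp.inner_apply]
  refine Finset.sum_nonpos fun i _ => ?_
  simp only [PiLp.sub_apply, RCLike.inner_apply, conj_trivial, hp i]
  rcases le_or_gt 0 (u i) with hu | hu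
  · simp [max_eq_left hu]
  · rw [max_eq_right hu.le, sub_zero, sub_zero]
    exact mul_nonpos_of_nonneg_of_nonpos (hz i) hu.le

section Smooth

variable {E : Type*} [NormedAddCommGroup E] [InnerProductSpace ℝ E] [CompleteSpace E]
  {f : E → ℝ} {f' : E → E} {β : ℝ}

lemma hasDerivAt_comp_lineMap_of_hasGradientAt (hf : ∀ x, HasGradientAt f (f' x) x)
    (p q : E) (t : ℝ) :
    HasDerivAt (f ∘ lineMap p q) ⟪f' (lineMap p q t), q - p⟫ t := by
  simpa [InnerProductSpace.toDual_apply_apply] using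
    (hf (lineMap p q t)).hasFDerivAt.comp_hasDerivAt t hasDerivAt_lineMap

lemma ConvexOn.add_inner_gradient_le (hconv : ConvexOn ℝ Set.univ f)
    (hf : ∀ x, HasGradientAt f (f' x) x) (p q : E) :
    f p + ⟪f' p, q - p⟫ ≤ f q := by
  have h := (hconv.comp_affineMap (lineMap p q)).le_slope_of_hasDerivAt
    (Set.mem_univ 0) (Set.mem_univ 1) zero_lt_one
    (hasDerivAt_comp_lineMap_of_hasGradientAt hf p q 0)
  simp only [slope_def_field, Function.comp_apply, lineMap_apply_zero, lineMap_apply_one,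
    sub_zero, div_one] at h
  linarith

lemma le_add_inner_gradient_add_sq (hf : ∀ x, HasGradientAt f (f' x) x)
    (hlip : ∀ x y, ‖f' x - f' y‖ ≤ β * ‖x - y‖) (p q : E) :
    f q ≤ f p + ⟪f' p, q - p⟫ + β / 2 * ‖q - p‖ ^ 2 := by
  set v := q - p
  set ψ : ℝ → ℝ := fun t => (f ∘ lineMap p q) t - t * ⟪f' p, v⟫ - β / 2 * t ^ 2 * ‖v‖ ^ 2
  have hψ : ∀ t, HasDerivAt ψ (⟪f' (lineMap p q t) - f' p, v⟫ - β * t * ‖v‖ ^ 2) t := by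
    intro t
    have := ((hasDerivAt_comp_lineMap_of_hasGradientAt hf p q t).sub
      ((hasDerivAt_id t).mul_const ⟪f' p, v⟫)).sub
      (((hasDerivAt_pow 2 t).const_mul (β / 2)).mul_const (‖v‖ ^ 2))
    refine this.congr_deriv ?_
    rw [inner_sub_left]
    norm_num
    ring
  have hanti : AntitoneOn ψ (Set.Icc 0 1) := by
    refine antitoneOn_of_deriv_nonpos (convex_Icc 0 1)
      (fun t _ => (hψ t).continuousAt.continuousWithinAt)
      (fun t _ => (hψ t).differentiableAt.differentiableWithinAt) fun t ht => ?_
    rw [interior_Icc] at ht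
    rw [(hψ t).deriv, sub_nonpos]
    calc ⟪f' (lineMap p q t) - f' p, v⟫ ≤ ‖f' (lineMap p q t) - f' p‖ * ‖v‖ :=
          real_inner_le_norm _ _
      _ ≤ β * ‖lineMap p q t - p‖ * ‖v‖ := by gcongr; exact hlip _ _
      _ = β * t * ‖v‖ ^ 2 := by
          rw [lineMap_apply_module', add_sub_cancel_right, norm_smul, norm_of_nonneg ht.1.le]
          ring
  have h := hanti (Set.left_mem_Icc.2 zero_le_one) (Set.right_mem_Icc.2 zero_le_one) zero_le_one
  simp only [ψ, Function.comp_apply, lineMap_apply_zero, lineMap_apply_one] at h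
  linarith

lemma sub_le_of_projected_gradient_step (hβ : 0 < β) (hconv : ConvexOn ℝ Set.univ f)
    (hf : ∀ x, HasGradientAt f (f' x) x) (hlip : ∀ x y, ‖f' x - f' y‖ ≤ β * ‖x - y‖)
    {y p z : E} (hproj : ⟪y - (1 / β) • f' y - p, z - p⟫ ≤ 0) :
    f p - f z ≤ β / 2 * (‖y - z‖ ^ 2 - ‖p - z‖ ^ 2) := by
  have hdescent := le_add_inner_gradient_add_sq hf hlip y p
  have hsupport := hconv.add_inner_gradient_le hf y z
  have hvar : ⟪f' y, p - z⟫ ≤ β * ⟪y - p, p - z⟫ := by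
    have hsplit : ⟪y - (1 / β) • f' y - p, z - p⟫
        = (1 / β) * (⟪f' y, p - z⟫ - β * ⟪y - p, p - z⟫) := by
      rw [show y - (1 / β) • f' y - p = (y - p) - (1 / β) • f' y by abel,
        show z - p = -(p - z) by abel, inner_sub_left, real_inner_smul_left,
        inner_neg_right, inner_neg_right]
      field_simp
      ring
    rw [hsplit] at hproj
    have := nonpos_of_mul_nonpos_right hproj (by positivity)
    linarith
  have hpyth : ‖y - z‖ ^ 2 = ‖y - p‖ ^ 2 + 2 * ⟪y - p, p - z⟫ + ‖p - z‖ ^ 2 := by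
    rw [show y - z = (y - p) + (p - z) by abel, norm_add_sq_real]
  have hinner : ⟪f' y, p - y⟫ - ⟪f' y, z - y⟫ = ⟪f' y, p - z⟫ := by
    rw [← inner_sub_right, sub_sub_sub_cancel_right]
  rw [norm_sub_rev p y] at hdescent
  nlinarith

end Smooth

lemma add_two_div_two_le_of_momentum_rec {a : ℕ → ℝ} (ha0 : 1 ≤ a 0)
    (harec : ∀ t, a (t + 1) = (1 + √(4 * a t ^ 2 + 1)) / 2) (t : ℕ) :
    ((t : ℝ) + 2) / 2 ≤ a t := by
  induction t with
  | zero => simpa using ha0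
  | succ t ih =>
    have hsqrt : 2 * a t ≤ √(4 * a t ^ 2 + 1) :=
      le_sqrt_of_sq_le (by nlinarith)
    rw [harec t]
    push_cast
    linarith

lemma sq_sub_self_of_momentum_rec {a : ℕ → ℝ}
    (harec : ∀ t, a (t + 1) = (1 + √(4 * a t ^ 2 + 1)) / 2) (t : ℕ) :
    a (t + 1) ^ 2 - a (t + 1) = a t ^ 2 := by
  rw [harec t]
  nlinarith [sq_sqrt (show 0 ≤ 4 * a t ^ 2 + 1 by positivity)]

section Accelerated

variable {E : Type*} [NormedAddCommGroup E] [InnerProductSpace ℝ E] {f : E → ℝ} {β : ℝ}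

lemma norm_smul_sub_add_sub_sq (A : ℝ) (w x₀ x₁ : E) :
    ‖(A - 1) • (w - x₀) + (w - x₁)‖ ^ 2
      = A * (A - 1) * ‖w - x₀‖ ^ 2 + A * ‖w - x₁‖ ^ 2 - (A - 1) * ‖x₀ - x₁‖ ^ 2 := by
  have h : ‖x₀ - x₁‖ ^ 2 = ‖w - x₀‖ ^ 2 - 2 * ⟪w - x₀, w - x₁⟫ + ‖w - x₁‖ ^ 2 := by
    rw [show x₀ - x₁ = (w - x₁) - (w - x₀) by abel, norm_sub_sq_real, real_inner_comm]
    ring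
  rw [norm_add_sq_real, norm_smul, real_inner_smul_left, h, norm_eq_abs, mul_pow, sq_abs]
  ring

lemma momentum_combination_eq {A A' : ℝ} (hA' : A' ≠ 0) {x₀ x₁ y : E}
    (hy : y = x₁ + ((A - 1) / A') • (x₁ - x₀)) (xs : E) :
    (A' - 1) • (y - x₁) + (y - xs) = (A - 1) • (x₁ - x₀) + (x₁ - xs) := by
  subst hy
  match_scalars <;> field_simp <;> ring


lemma momentum_energy_le {A : ℝ} (hA : 1 ≤ A) {y x₀ x₁ xs : E}
    (h₀ : f x₁ - f x₀ ≤ β / 2 * (‖y - x₀‖ ^ 2 - ‖x₁ - x₀‖ ^ 2))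
    (hs : f x₁ - f xs ≤ β / 2 * (‖y - xs‖ ^ 2 - ‖x₁ - xs‖ ^ 2)) :
    A ^ 2 * (f x₁ - f xs) + β / 2 * ‖(A - 1) • (x₁ - x₀) + (x₁ - xs)‖ ^ 2
      ≤ (A ^ 2 - A) * (f x₀ - f xs) + β / 2 * ‖(A - 1) • (y - x₀) + (y - xs)‖ ^ 2 := by
  have m₀ := mul_le_mul_of_nonneg_left h₀ (by nlinarith : 0 ≤ A * (A - 1))
  have ms := mul_le_mul_of_nonneg_left hs (by linarith : 0 ≤ A)
  rw [norm_smul_sub_add_sub_sq, norm_smul_sub_add_sub_sq]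
  linarith

lemma sq_mul_sub_le_of_accelerated {K : Set E} (hβ : 0 ≤ β) {x y : ℕ → E} {a : ℕ → ℝ}
    {xs : E} (hxs : xs ∈ K) (hxK : ∀ t, x t ∈ K)
    (hstep : ∀ t, ∀ z ∈ K, f (x (t + 1)) - f z ≤ β / 2 * (‖y t - z‖ ^ 2 - ‖x (t + 1) - z‖ ^ 2))
    (hy0 : y 0 = x 0) (ha0 : a 0 = 1) (ha : ∀ t, 1 ≤ a t)
    (harel : ∀ t, a (t + 1) ^ 2 - a (t + 1) = a t ^ 2)
    (hyrec : ∀ t, y (t + 1) = x (t + 1) + ((a t - 1) / a (t + 1)) • (x (t + 1) - x t))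
    (t : ℕ) :
    a t ^ 2 * (f (x (t + 1)) - f xs) ≤ β / 2 * ‖x 0 - xs‖ ^ 2 := by
  have henergy : ∀ t, a t ^ 2 * (f (x (t + 1)) - f xs)
      + β / 2 * ‖(a t - 1) • (x (t + 1) - x t) + (x (t + 1) - xs)‖ ^ 2
      ≤ β / 2 * ‖x 0 - xs‖ ^ 2 := by
    intro t
    induction t with
    | zero =>
      have h := momentum_energy_le (ha 0) (hstep 0 _ (hxK 0)) (hstep 0 xs hxs)
      simpa [ha0, hy0] using h
    | succ t ih =>
      have h := momentum_energy_le (ha (t + 1)) (hstep (t + 1) _ (hxK (t + 1)))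
        (hstep (t + 1) xs hxs)
      rw [harel, momentum_combination_eq (by linarith [ha (t + 1)]) (hyrec t)] at h
      linarith
  have := henergy t
  have : 0 ≤ β / 2 * ‖(a t - 1) • (x (t + 1) - x t) + (x (t + 1) - xs)‖ ^ 2 := by positivity
  linarith

end Accelerated

/-- Convergence of Nesterov's accelerated gradient method with step size `1/β`
for a convex, `β`-smooth objective minimized over the nonnegative orthant:
`f(x^T) − f(x*) ≤ 2β‖x* − x⁰‖²/(T+1)²` for every `T ≥ 1`. -/
theorem stmt_11 (d : ℕ) (β : ℝ) (hβ : 0 < β)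
    (f : EuclideanSpace ℝ (Fin d) → ℝ)
    (f' : EuclideanSpace ℝ (Fin d) → EuclideanSpace ℝ (Fin d))
    (hconv : ConvexOn ℝ Set.univ f)
    (hdiff : ∀ x : EuclideanSpace ℝ (Fin d), HasGradientAt f (f' x) x)
    (hlip : ∀ x y : EuclideanSpace ℝ (Fin d), ‖f' x - f' y‖ ≤ β * ‖x - y‖)
    (xstar : EuclideanSpace ℝ (Fin d)) (hxstarK : ∀ i, 0 ≤ xstar i)
    (hmin : ∀ z : EuclideanSpace ℝ (Fin d), (∀ i, 0 ≤ z i) → f xstar ≤ f z)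
    (x y : ℕ → EuclideanSpace ℝ (Fin d)) (a : ℕ → ℝ)
    (hx0K : ∀ i, 0 ≤ x 0 i)
    (hy0 : y 0 = x 0) (ha0 : a 0 = 1)
    (hxrec : ∀ t : ℕ, ∀ i : Fin d,
      x (t + 1) i = max ((y t - (1 / β) • f' (y t)) i) 0)
    (harec : ∀ t : ℕ, a (t + 1) = (1 + Real.sqrt (4 * (a t) ^ 2 + 1)) / 2)
    (hyrec : ∀ t : ℕ,
      y (t + 1) = x (t + 1) + ((a t - 1) / a (t + 1)) • (x (t + 1) - x t)) :
    ∀ T : ℕ, 1 ≤ T →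
      f (x T) - f xstar ≤ 2 * β * ‖xstar - x 0‖ ^ 2 / ((T : ℝ) + 1) ^ 2 := by
  intro T hT
  obtain ⟨t, rfl⟩ := Nat.exists_eq_add_of_le' hT
  have hagrow := add_two_div_two_le_of_momentum_rec ha0.ge harec
  have hxK : ∀ t i, 0 ≤ x t i
    | 0 => hx0K
    | t + 1 => fun i => (hxrec t i).symm ▸ le_max_right _ _
  have hone : ∀ t, 1 ≤ a t := fun t => by linarith [hagrow t, (t.cast_nonneg : (0 : ℝ) ≤ t)]
  have hbound := sq_mul_sub_le_of_accelerated
    (K := {z : EuclideanSpace ℝ (Fin d) | ∀ i, 0 ≤ z i}) hβ.le hxstarK hxK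
    (fun t _ hz => sub_le_of_projected_gradient_step hβ hconv hdiff hlip
      (inner_sub_max_zero_nonpos (hxrec t) hz))
    hy0 ha0 hone (sq_sub_self_of_momentum_rec harec) hyrec t
  have hgap : 0 ≤ f (x (t + 1)) - f xstar := sub_nonneg.2 (hmin _ (hxK _))
  have hsq : (((t : ℝ) + 2) / 2) ^ 2 ≤ a t ^ 2 := pow_le_pow_left₀ (by positivity) (hagrow t) 2
  rw [norm_sub_rev] at hbound
  rw [le_div_iff₀ (by positivity)]
  push_cast
  nlinarith [mul_le_mul_of_nonneg_left hsq hgap]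
end
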